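/- For every prime p and every rational vector t ∈ ℚ^n with p > den(t), and every nonzero integer vector v' ∈ ℤ^n all of whose coordinates have absolute value strictly less than p, one has den(t + v'/p) = den(t) · p. -/

import Mathlib

/-- Denominator of a rational vector: lcm of coordinate denominators. -/
def vecDen {n : ℕ} (v : Fin n → ℚ) : ℕ :=
  Finset.univ.lcm (fun i => (v i).den)

/-!
Denominators of rational vectors behave like orders in a torsion group: `den (x + y)` divides
`lcm (den x) (den y)`, and applying this also to `x = (x + y) - y` and `y = (x + y) - x` shows that
the denominators multiply when they are coprime. Since `den t < p`, it is coprime to `p`, and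
`den (v' / p) = p` because some coordinate of `v'` is nonzero and none is divisible by `p`.
-/

theorem Rat.den_intCast_div_prime {p : ℕ} (hp : p.Prime) {a : ℤ} (ha : ¬ (p : ℤ) ∣ a) :
    ((a : ℚ) / p).den = p := by
  have hcop : a.natAbs.Coprime (p : ℤ).natAbs :=
    Nat.coprime_comm.mp (hp.coprime_iff_not_dvd.mpr (by simpa [Int.natCast_dvd] using ha))
  exact_mod_cast Rat.den_div_eq_of_coprime (by exact_mod_cast hp.pos) hcop

section vecDen

variable {n : ℕ}

theorem dvd_vecDen (v : Fin n → ℚ) (i : Fin n) : (v i).den ∣ vecDen v :=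
  Finset.dvd_lcm (Finset.mem_univ i)

theorem vecDen_pos (v : Fin n → ℚ) : 0 < vecDen v :=
  Nat.pos_of_ne_zero <| by simp [vecDen, Finset.lcm_eq_zero_iff]

theorem vecDen_neg (v : Fin n → ℚ) : vecDen (-v) = vecDen v := by
  simp [vecDen]

theorem vecDen_add_dvd_lcm (x y : Fin n → ℚ) : vecDen (x + y) ∣ (vecDen x).lcm (vecDen y) :=
  Finset.lcm_dvd fun i _ => (Rat.add_den_dvd_lcm _ _).trans <|
    Nat.lcm_dvd ((dvd_vecDen x i).trans (Nat.dvd_lcm_left _ _))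
      ((dvd_vecDen y i).trans (Nat.dvd_lcm_right _ _))

theorem vecDen_add_of_coprime {x y : Fin n → ℚ} (h : (vecDen x).Coprime (vecDen y)) :
    vecDen (x + y) = vecDen x * vecDen y := by
  have hx : vecDen x ∣ vecDen (x + y) := by
    have := vecDen_add_dvd_lcm (x + y) (-y)
    rw [add_neg_cancel_right, vecDen_neg] at this
    exact h.dvd_of_dvd_mul_right (this.trans (Nat.lcm_dvd_mul _ _))
  have hy : vecDen y ∣ vecDen (x + y) := by
    have := vecDen_add_dvd_lcm (x + y) (-x)
    rw [add_neg_cancel_comm, vecDen_neg] at this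
    exact h.symm.dvd_of_dvd_mul_right (this.trans (Nat.lcm_dvd_mul _ _))
  refine Nat.dvd_antisymm ?_ (h.mul_dvd_of_dvd_of_dvd hx hy)
  exact h.lcm_eq_mul ▸ vecDen_add_dvd_lcm x y

theorem vecDen_intCast_div_prime {p : ℕ} (hp : p.Prime) {v : Fin n → ℤ} (hv : v ≠ 0)
    (hbound : ∀ i, (v i).natAbs < p) : vecDen (fun i => (v i : ℚ) / p) = p := by
  have hden : ∀ i, v i ≠ 0 → ((v i : ℚ) / p).den = p := fun i hi =>
    Rat.den_intCast_div_prime hp fun hdvd =>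
      hi (Int.eq_zero_of_dvd_of_natAbs_lt_natAbs hdvd (by simpa using hbound i))
  refine Nat.dvd_antisymm (Finset.lcm_dvd fun i _ => ?_) ?_
  · by_cases hi : v i = 0
    · simp [hi]
    · rw [hden i hi]
  · obtain ⟨j, hj⟩ := Function.ne_iff.mp hv
    simpa only [hden j hj] using dvd_vecDen (fun i => (v i : ℚ) / p) j

end vecDen

theorem stmt_7 {n : ℕ} (p : ℕ) (hp : p.Prime) (t : Fin n → ℚ)
    (hpt : vecDen t < p) (v' : Fin n → ℤ) (hv' : v' ≠ 0)
    (hbound : ∀ i, (v' i).natAbs < p) :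
    vecDen (t + fun i => (v' i : ℚ) / (p : ℚ)) = vecDen t * p := by
  have hdiv : vecDen (fun i => (v' i : ℚ) / p) = p := vecDen_intCast_div_prime hp hv' hbound
  have hcop : (vecDen t).Coprime p := (Nat.coprime_of_lt_prime (vecDen_pos t).ne' hpt hp).symm
  rw [vecDen_add_of_coprime (hdiv.symm ▸ hcop), hdiv]
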